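/- arXiv:2307.15339 — 3 statements merged into one kernel-verified Lean document; each statement's English description precedes it below -/
import Mathlib

section
/- CDT composition property: let r be a positive probability density on ℝ and s a positive probability density, with CDT ŝ defined by F_s(ŝ(x)) = F_r(x) where F denotes the CDF. If g : ℝ → ℝ is a strictly increasing differentiable bijection and s_g = g'·(s ∘ g), then the CDT of s_g equals g⁻¹ ∘ ŝ. -/
open MeasureTheory Set Filter Topology

private lemma cdt_integrable {f : ℝ → ℝ} (h : ∫ x, f x = 1) : Integrable f := by
  by_contra hni
  rw [MeasureTheory.integral_undef hni] at h
  norm_num at h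

private lemma cdt_strictMono {f : ℝ → ℝ} (hc : Continuous f) (h0 : ∀ x, 0 < f x)
    (hi : Integrable f) : StrictMono (fun y => ∫ t in Iic y, f t) := by
  intro a b hab
  have h := intervalIntegral.integral_Iic_sub_Iic (hi.integrableOn (s := Iic a))
    (hi.integrableOn (s := Iic b))
  have hpos : 0 < ∫ x in a..b, f x :=
    intervalIntegral.intervalIntegral_pos_of_pos (hc.intervalIntegrable a b) h0 hab
  dsimp only
  linarith

private lemma cdt_pos {f : ℝ → ℝ} (hc : Continuous f) (h0 : ∀ x, 0 < f x)
    (hi : Integrable f) (x : ℝ) : 0 < ∫ t in Iic x, f t := by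
  have h := intervalIntegral.integral_Iic_sub_Iic (hi.integrableOn (s := Iic (x - 1)))
    (hi.integrableOn (s := Iic x))
  have hpos : 0 < ∫ t in (x - 1)..x, f t :=
    intervalIntegral.intervalIntegral_pos_of_pos (hc.intervalIntegrable _ _) h0 (by linarith)
  have hnn : 0 ≤ ∫ t in Iic (x - 1), f t :=
    setIntegral_nonneg measurableSet_Iic (fun t _ => (h0 t).le)
  linarith

private lemma cdt_lt_total {f : ℝ → ℝ} (hc : Continuous f) (h0 : ∀ x, 0 < f x)
    (hi : Integrable f) (x : ℝ) : (∫ t in Iic x, f t) < ∫ t, f t := by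
  have h := intervalIntegral.integral_Iic_add_Ioi (hi.integrableOn (s := Iic x))
    (hi.integrableOn (s := Ioi x))
  have hpos : 0 < ∫ t in x..(x + 1), f t :=
    intervalIntegral.intervalIntegral_pos_of_pos (hc.intervalIntegrable _ _) h0 (by linarith)
  have hle : (∫ t in x..(x + 1), f t) ≤ ∫ t in Ioi x, f t := by
    rw [intervalIntegral.integral_of_le (by linarith)]
    apply setIntegral_mono_set (hi.integrableOn)
      (Filter.Eventually.of_forall fun t => (h0 t).le)
      (Filter.Eventually.of_forall fun t ht => ht.1)
  linarith

private lemma cdt_tendsto_atTop {f : ℝ → ℝ} (hi : Integrable f) :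
    Tendsto (fun y => ∫ t in Iic y, f t) atTop (𝓝 (∫ t, f t)) :=
  (MeasureTheory.aecover_Iic tendsto_id).integral_tendsto_of_countably_generated hi

private lemma cdt_tendsto_atBot {f : ℝ → ℝ} (hi : Integrable f) :
    Tendsto (fun y => ∫ t in Iic y, f t) atBot (𝓝 0) := by
  have h1 : Tendsto (fun y : ℝ => ∫ t in Ioi y, f t) atBot (𝓝 (∫ t, f t)) :=
    (MeasureTheory.aecover_Ioi tendsto_id).integral_tendsto_of_countably_generated hi
  have h2 : Tendsto (fun y : ℝ => (∫ t, f t) - ∫ t in Ioi y, f t) atBot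
      (𝓝 ((∫ t, f t) - ∫ t, f t)) := tendsto_const_nhds.sub h1
  rw [sub_self] at h2
  refine h2.congr fun y => ?_
  have h := intervalIntegral.integral_Iic_add_Ioi (hi.integrableOn (s := Iic y))
    (hi.integrableOn (s := Ioi y))
  linarith

private lemma cdt_continuous {f : ℝ → ℝ} (hi : Integrable f) :
    Continuous (fun y => ∫ t in Iic y, f t) := by
  have h : ∀ y, (∫ t in Iic y, f t)
      = (∫ t in Iic (0:ℝ), f t) + ∫ t in (0:ℝ)..y, f t := fun y => by
    have := intervalIntegral.integral_Iic_sub_Iic (hi.integrableOn (s := Iic (0:ℝ)))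
      (hi.integrableOn (s := Iic y))
    linarith
  rw [funext h]
  exact continuous_const.add (hi.continuous_primitive 0)

private lemma cdt_surj {f : ℝ → ℝ} (hc : Continuous f) (h0 : ∀ x, 0 < f x)
    (hi : Integrable f) {z : ℝ} (hz0 : 0 < z) (hz1 : z < ∫ t, f t) :
    ∃ b, (∫ t in Iic b, f t) = z := by
  obtain ⟨M, hM⟩ := ((cdt_tendsto_atBot hi).eventually_lt_const hz0).exists
  obtain ⟨N, hN⟩ := ((cdt_tendsto_atTop hi).eventually_const_lt hz1).exists
  have hMN : M ≤ N := by
    by_contra h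
    exact absurd ((cdt_strictMono hc h0 hi).monotone (le_of_not_ge h)) (by simp; linarith)
  have := intermediate_value_Icc hMN (cdt_continuous hi).continuousOn
  obtain ⟨b, _, hb⟩ := this ⟨hM.le, hN.le⟩
  exact ⟨b, hb⟩

/-- CDT composition property: if `s_g = g'·(s ∘ g)` for a strictly increasing
differentiable bijection `g` with `g' > 0`, then the CDT of `s_g` (w.r.t. the
reference density `r`) equals `g⁻¹ ∘ ŝ`, where `ŝ = F_s⁻¹ ∘ F_r`. -/
theorem cdt_composition (r s g : ℝ → ℝ)
    (hrc : Continuous r) (hr0 : ∀ x, 0 < r x) (hr1 : ∫ x, r x = 1)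
    (hsc : Continuous s) (hs0 : ∀ x, 0 < s x) (hs1 : ∫ x, s x = 1)
    (hg : StrictMono g) (hgd : Differentiable ℝ g)
    (hgb : Function.Bijective g) (hg' : ∀ t, 0 < deriv g t) :
    ∀ x : ℝ,
      Function.invFun (fun y => ∫ t in Set.Iic y, deriv g t * s (g t))
          (∫ t in Set.Iic x, r t)
        = Function.invFun g
            (Function.invFun (fun y => ∫ t in Set.Iic y, s t)
              (∫ t in Set.Iic x, r t)) := by
  intro x
  have hri : Integrable r := cdt_integrable hr1
  have hsi : Integrable s := cdt_integrable hs1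
  set Fs : ℝ → ℝ := fun y => ∫ t in Iic y, s t with hFs
  set Fsg : ℝ → ℝ := fun y => ∫ t in Iic y, deriv g t * s (g t) with hFsg
  set z : ℝ := ∫ t in Iic x, r t with hzdef
  -- change of variables : Fsg = Fs ∘ g
  have hcomp : ∀ y, Fsg y = Fs (g y) := by
    intro y
    have himg : g '' Iic y = Iic (g y) := by
      ext t
      simp only [Set.mem_image, Set.mem_Iic]
      constructor
      · rintro ⟨u, hu, rfl⟩; exact hg.monotone hu
      · intro ht
        obtain ⟨u, rfl⟩ := hgb.2 t
        exact ⟨u, hg.le_iff_le.mp ht, rfl⟩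
    have := MeasureTheory.integral_image_eq_integral_abs_deriv_smul
      (measurableSet_Iic (a := y)) (f := g) (f' := deriv g)
      (fun u _ => (hgd u).hasDerivAt.hasDerivWithinAt) (hg.injective.injOn) s
    rw [himg] at this
    simp only [smul_eq_mul] at this
    show (∫ t in Iic y, deriv g t * s (g t)) = ∫ t in Iic (g y), s t
    rw [this]
    refine setIntegral_congr_fun measurableSet_Iic fun u _ => ?_
    rw [abs_of_pos (hg' u)]
  have hFseq : Fsg = Fs ∘ g := funext hcomp
  -- z is in (0, 1)
  have hz0 : 0 < z := cdt_pos hrc hr0 hri x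
  have hz1 : z < 1 := by
    have := cdt_lt_total hrc hr0 hri x
    rwa [hr1] at this
  -- pick b with Fs b = z
  obtain ⟨b, hb⟩ : ∃ b, Fs b = z := by
    refine cdt_surj hsc hs0 hsi hz0 ?_
    rwa [hs1]
  have hsmono : StrictMono Fs := cdt_strictMono hsc hs0 hsi
  have hinvFs : Function.invFun Fs z = b := by
    have h1 : Fs (Function.invFun Fs z) = z := Function.invFun_eq ⟨b, hb⟩
    exact hsmono.injective (h1.trans hb.symm)
  set a : ℝ := Function.invFun g b with hadef
  have hga : g a = b := Function.rightInverse_invFun hgb.2 b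
  have hsga : Fsg a = z := by rw [hcomp, hga, hb]
  have hsgmono : StrictMono Fsg := by
    rw [hFseq]; exact hsmono.comp hg
  have hinvFsg : Function.invFun Fsg z = a := by
    have h1 : Fsg (Function.invFun Fsg z) = z := Function.invFun_eq ⟨a, hsga⟩
    exact hsgmono.injective (h1.trans hsga.symm)
  rw [hinvFsg, hinvFs]
end

section
/- CDT isometric embedding: for probability densities s₁, s₂ on ℝ with CDTs ŝ₁, ŝ₂ with respect to a reference density r, the squared 2-Wasserstein distance satisfies W₂²(s₁, s₂) = ∫ |ŝ₁(x) − ŝ₂(x)|² r(x) dx. -/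
open MeasureTheory

/-- CDT isometric embedding: the squared 2-Wasserstein distance between two
probability densities equals the weighted-Euclidean distance between their
CDTs taken with respect to a reference density `r`:
`W₂²(s₁,s₂) = ∫ |ŝ₁(x) − ŝ₂(x)|² r(x) dx`, where `ŝᵢ = F_{sᵢ}⁻¹ ∘ F_r` and
`W₂²(s₁,s₂) = ∫₀¹ |F_{s₁}⁻¹(u) − F_{s₂}⁻¹(u)|² du`. -/
theorem cdt_isometric_embedding (r s₁ s₂ : ℝ → ℝ)
    (hrc : Continuous r) (hr0 : ∀ x, 0 < r x) (hr1 : ∫ x, r x = 1)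
    (hs₁c : Continuous s₁) (hs₁0 : ∀ x, 0 < s₁ x) (hs₁1 : ∫ x, s₁ x = 1)
    (hs₂c : Continuous s₂) (hs₂0 : ∀ x, 0 < s₂ x) (hs₂1 : ∫ x, s₂ x = 1) :
    (∫ u in Set.Ioo (0:ℝ) 1,
        |Function.invFun (fun y => ∫ t in Set.Iic y, s₁ t) u -
         Function.invFun (fun y => ∫ t in Set.Iic y, s₂ t) u| ^ 2)
      = ∫ x : ℝ,
          |Function.invFun (fun y => ∫ t in Set.Iic y, s₁ t)
              (∫ t in Set.Iic x, r t) -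
           Function.invFun (fun y => ∫ t in Set.Iic y, s₂ t)
              (∫ t in Set.Iic x, r t)| ^ 2 * r x := by
  set g : ℝ → ℝ := fun u =>
    |Function.invFun (fun y => ∫ t in Set.Iic y, s₁ t) u -
     Function.invFun (fun y => ∫ t in Set.Iic y, s₂ t) u| ^ 2 with hg
  set F : ℝ → ℝ := fun x => ∫ t in Set.Iic x, r t with hFdef
  have hr_int : Integrable r := by
    by_contra h
    rw [integral_undef h] at hr1
    norm_num at hr1
  -- F differs from an interval integral by a constant
  have hFrepr : ∀ y, F y = (∫ t in Set.Iic (0:ℝ), r t) + ∫ t in (0:ℝ)..y, r t := by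
    intro y
    have := intervalIntegral.integral_Iic_sub_Iic (μ := volume) (f := r)
      hr_int.integrableOn hr_int.integrableOn (a := 0) (b := y)
    linarith [this]
  -- derivative of F
  have hderiv : ∀ x, HasDerivAt F (r x) x := by
    intro x
    have h := (hrc.integral_hasStrictDerivAt 0 x).hasDerivAt
    have h' : HasDerivAt (fun y => (∫ t in Set.Iic (0:ℝ), r t) + ∫ t in (0:ℝ)..y, r t)
        (r x) x := (h.const_add _)
    exact h'.congr_of_eventuallyEq (Filter.Eventually.of_forall fun y => (hFrepr y))
  -- strict monotonicity of F
  have hmono : StrictMono F := by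
    intro a b hab
    have h := intervalIntegral.integral_Iic_sub_Iic (μ := volume) (f := r)
      hr_int.integrableOn hr_int.integrableOn (a := a) (b := b)
    have hpos : 0 < ∫ t in a..b, r t :=
      intervalIntegral.intervalIntegral_pos_of_pos (hrc.intervalIntegrable a b) hr0 hab
    simp only [F]
    linarith
  -- F x ∈ Ioo 0 1
  have hFle : ∀ x, F x ≤ 1 := by
    intro x
    rw [← hr1]
    exact setIntegral_le_integral hr_int
      (Filter.Eventually.of_forall fun t => (hr0 t).le)
  have hF0 : ∀ x, 0 ≤ F x :=
    fun x => setIntegral_nonneg measurableSet_Iic fun t _ => (hr0 t).le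
  have hFmem : ∀ x, F x ∈ Set.Ioo (0:ℝ) 1 := by
    intro x
    refine ⟨lt_of_le_of_lt (hF0 (x - 1)) (hmono (by linarith)),
      lt_of_lt_of_le (hmono (show x < x + 1 by linarith)) (hFle (x + 1))⟩
  -- limits of F
  have htop : Filter.Tendsto F Filter.atTop (nhds 1) := by
    have := (MeasureTheory.aecover_Iic (μ := volume) (l := Filter.atTop)
      (b := fun i : ℝ => i) Filter.tendsto_id).integral_tendsto_of_countably_generated hr_int
    rwa [hr1] at this
  have hbot : Filter.Tendsto F Filter.atBot (nhds 0) := by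
    have hcov := (MeasureTheory.aecover_Ioi (μ := volume) (l := Filter.atBot)
      (a := fun i : ℝ => i) Filter.tendsto_id).integral_tendsto_of_countably_generated hr_int
    rw [hr1] at hcov
    have heq : ∀ a : ℝ, F a = 1 - ∫ t in Set.Ioi a, r t := by
      intro a
      have := intervalIntegral.integral_Iic_add_Ioi (μ := volume) (f := r) (b := a)
        hr_int.integrableOn hr_int.integrableOn
      rw [hr1] at this
      simp only [F]
      linarith
    have : Filter.Tendsto (fun a => 1 - ∫ t in Set.Ioi a, r t) Filter.atBot (nhds (1 - 1)) :=
      (tendsto_const_nhds.sub hcov)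
    norm_num at this
    exact this.congr fun a => (heq a).symm
  -- range of F is Ioo 0 1
  have hrange : Set.range F = Set.Ioo 0 1 := by
    apply Set.Subset.antisymm
    · rintro _ ⟨x, rfl⟩; exact hFmem x
    · rintro u ⟨hu0, hu1⟩
      have h1 : ∃ a, F a ≤ u := by
        obtain ⟨a, ha⟩ := ((tendsto_order.1 hbot).2 u hu0).exists
        exact ⟨a, ha.le⟩
      have h2 : ∃ b, u ≤ F b := by
        obtain ⟨b, hb⟩ := ((tendsto_order.1 htop).1 u hu1).exists
        exact ⟨b, hb.le⟩
      exact mem_range_of_exists_le_of_exists_ge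
        (continuous_iff_continuousAt.2 fun x => (hderiv x).continuousAt) h1 h2
  -- change of variables
  have hkey := integral_image_eq_integral_abs_deriv_smul (s := Set.univ) (f := F)
    (f' := r) MeasurableSet.univ
    (fun x _ => (hderiv x).hasDerivWithinAt)
    (hmono.injective.injOn) g
  rw [Set.image_univ, hrange] at hkey
  rw [Measure.restrict_univ] at hkey
  calc (∫ u in Set.Ioo (0:ℝ) 1, g u) = ∫ x : ℝ, |r x| • g (F x) := hkey
    _ = ∫ x : ℝ, g (F x) * r x := by
        congr 1
        funext x
        rw [abs_of_pos (hr0 x), smul_eq_mul, mul_comm]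
end

section
/- The signed Wasserstein distance D_S satisfies the triangle inequality: D_S(s₁, s₃) ≤ D_S(s₁, s₂) + D_S(s₂, s₃) for signed integrable functions s₁, s₂, s₃ with finite second moments. -/
open MeasureTheory

/-- Cumulative distribution function of a density. -/
noncomputable def cdf (f : ℝ → ℝ) (x : ℝ) : ℝ := ∫ t in Set.Iic x, f t

/-- Quantile function (generalized inverse of the CDF). -/
noncomputable def quant (f : ℝ → ℝ) : ℝ → ℝ := Function.invFun (cdf f)

/-- L¹ norm of a function on ℝ. -/
noncomputable def L1 (f : ℝ → ℝ) : ℝ := ∫ t, |f t|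

/-- Squared 2-Wasserstein distance between densities via quantile functions. -/
noncomputable def W2sq (p q : ℝ → ℝ) : ℝ :=
  ∫ u in Set.Ioo (0:ℝ) 1, (quant p u - quant q u) ^ 2

/-- `D_{W²}²(p,q) = W₂²(p/‖p‖₁, q/‖q‖₁) + (‖p‖₁ − ‖q‖₁)²`. -/
noncomputable def DW2sq (p q : ℝ → ℝ) : ℝ :=
  W2sq (fun t => p t / L1 p) (fun t => q t / L1 q) + (L1 p - L1 q) ^ 2

/-- Positive part. -/
noncomputable def sigPos' (f : ℝ → ℝ) : ℝ → ℝ := fun t => max (f t) 0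

/-- Negative part. -/
noncomputable def sigNeg' (f : ℝ → ℝ) : ℝ → ℝ := fun t => max (-f t) 0

/-- Squared signed Wasserstein distance. -/
noncomputable def DSsq (r s : ℝ → ℝ) : ℝ :=
  DW2sq (sigPos' r) (sigPos' s) + DW2sq (sigNeg' r) (sigNeg' s)

/-- Signed Wasserstein distance. -/
noncomputable def DS (r s : ℝ → ℝ) : ℝ := Real.sqrt (DSsq r s)

/-!
`√(W2sq p q)` is the `L²(0,1)` distance between the quantile functions of `p` and `q`; these lie in
`L²(0,1)` because the quantile function of a probability density pushes Lebesgue measure on `(0,1)`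
forward to that density, so its second moment is the density's. Hence `√W2sq` and
`|L1 p - L1 q|` both satisfy the triangle inequality, and by Minkowski's inequality in `ℝ²` so does
`√(A + B)` for any two such quantities `√A`, `√B`. Applying this once gives the triangle inequality
for `√DW2sq`, and once more, on positive and negative parts, for `DS`.
-/

open Set Filter Topology

section L2

variable {α : Type*} [MeasurableSpace α] {μ : Measure α}

theorem MeasureTheory.MemLp.sqrt_integral_sq_eq_norm_toLp {f : α → ℝ} (hf : MemLp f 2 μ) :
    √(∫ a, f a ^ 2 ∂μ) = ‖hf.toLp f‖ := by
  have h : ‖hf.toLp f‖ ^ 2 = ∫ a, f a ^ 2 ∂μ := by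
    rw [← real_inner_self_eq_norm_sq, L2.inner_def]
    refine integral_congr_ae (hf.coeFn_toLp.mono fun a ha => ?_)
    simp [ha, sq]
  rw [← h, Real.sqrt_sq (norm_nonneg _)]

theorem sqrt_integral_add_sq_le {f g : α → ℝ} (hf : MemLp f 2 μ) (hg : MemLp g 2 μ) :
    √(∫ a, (f a + g a) ^ 2 ∂μ) ≤ √(∫ a, f a ^ 2 ∂μ) + √(∫ a, g a ^ 2 ∂μ) := by
  have hfg : MemLp (f + g) 2 μ := hf.add hg
  calc √(∫ a, (f a + g a) ^ 2 ∂μ) = ‖hf.toLp f + hg.toLp g‖ := by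
        rw [← MemLp.toLp_add]; exact hfg.sqrt_integral_sq_eq_norm_toLp
    _ ≤ ‖hf.toLp f‖ + ‖hg.toLp g‖ := norm_add_le _ _
    _ = √(∫ a, f a ^ 2 ∂μ) + √(∫ a, g a ^ 2 ∂μ) := by
        rw [hf.sqrt_integral_sq_eq_norm_toLp, hg.sqrt_integral_sq_eq_norm_toLp]

end L2

theorem sqrt_sq_add_sq_le_add (a₁ b₁ a₂ b₂ : ℝ) :
    √((a₁ + a₂) ^ 2 + (b₁ + b₂) ^ 2) ≤ √(a₁ ^ 2 + b₁ ^ 2) + √(a₂ ^ 2 + b₂ ^ 2) := by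
  have hcs : a₁ * a₂ + b₁ * b₂ ≤ √(a₁ ^ 2 + b₁ ^ 2) * √(a₂ ^ 2 + b₂ ^ 2) := by
    rw [← Real.sqrt_mul (by positivity)]
    exact (le_abs_self _).trans (Real.abs_le_sqrt (by nlinarith [sq_nonneg (a₁ * b₂ - a₂ * b₁)]))
  refine Real.sqrt_le_iff.2 ⟨by positivity, ?_⟩
  nlinarith [Real.sq_sqrt (add_nonneg (sq_nonneg a₁) (sq_nonneg b₁)),
    Real.sq_sqrt (add_nonneg (sq_nonneg a₂) (sq_nonneg b₂))]

theorem sqrt_add_le_of_sqrt_le_of_sqrt_le {A B A₁ B₁ A₂ B₂ : ℝ} (hA₁ : 0 ≤ A₁) (hB₁ : 0 ≤ B₁)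
    (hA₂ : 0 ≤ A₂) (hB₂ : 0 ≤ B₂) (hA : √A ≤ √A₁ + √A₂) (hB : √B ≤ √B₁ + √B₂) :
    √(A + B) ≤ √(A₁ + B₁) + √(A₂ + B₂) :=
  calc √(A + B) ≤ √((√A₁ + √A₂) ^ 2 + (√B₁ + √B₂) ^ 2) :=
        Real.sqrt_le_sqrt (add_le_add (Real.sqrt_le_iff.1 hA).2 (Real.sqrt_le_iff.1 hB).2)
    _ ≤ √(√A₁ ^ 2 + √B₁ ^ 2) + √(√A₂ ^ 2 + √B₂ ^ 2) := sqrt_sq_add_sq_le_add _ _ _ _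
    _ = √(A₁ + B₁) + √(A₂ + B₂) := by
        rw [Real.sq_sqrt hA₁, Real.sq_sqrt hB₁, Real.sq_sqrt hA₂, Real.sq_sqrt hB₂]

section Cdf

variable {p : ℝ → ℝ}

theorem cdf_eq_cdf_zero_add (hp : Integrable p) (x : ℝ) :
    cdf p x = cdf p 0 + ∫ t in (0 : ℝ)..x, p t := by
  rw [← intervalIntegral.integral_Iic_sub_Iic hp.integrableOn hp.integrableOn, cdf, cdf]
  ring

theorem continuous_cdf (hp : Integrable p) : Continuous (cdf p) := by
  rw [funext (cdf_eq_cdf_zero_add hp)]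
  exact continuous_const.add (hp.continuous_primitive 0)

theorem tendsto_cdf_atBot : Tendsto (cdf p) atBot (𝓝 0) :=
  tendsto_integral_Iic_zero tendsto_id

theorem tendsto_cdf_atTop (hp : Integrable p) : Tendsto (cdf p) atTop (𝓝 (∫ t, p t)) := by
  have := tendsto_setIntegral_of_monotone (μ := volume) (f := p) (fun x => measurableSet_Iic)
    (fun _ _ h => Iic_subset_Iic.2 h) (by simpa using hp)
  simp only [iUnion_Iic, Measure.restrict_univ] at this
  exact this

theorem exists_cdf_eq (hp : Integrable p) {u : ℝ} (h0 : 0 < u) (h1 : u < ∫ t, p t) :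
    ∃ x, cdf p x = u := by
  obtain ⟨a, ha⟩ := (tendsto_cdf_atBot.eventually_lt_const h0).exists
  obtain ⟨b, hb⟩ := ((tendsto_cdf_atTop hp).eventually_const_lt h1).exists
  exact intermediate_value_univ a b (continuous_cdf hp) ⟨ha.le, hb.le⟩

theorem monotone_cdf (hp : Integrable p) (hnn : ∀ t, 0 ≤ p t) : Monotone (cdf p) :=
  fun _ _ hxy => setIntegral_mono_set hp.integrableOn (.of_forall hnn)
    (Iic_subset_Iic.2 hxy).eventuallyLE

theorem cdf_le_integral (hp : Integrable p) (hnn : ∀ t, 0 ≤ p t) (x : ℝ) :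
    cdf p x ≤ ∫ t, p t :=
  setIntegral_le_integral hp (.of_forall hnn)

end Cdf

section Quantile

variable {p : ℝ → ℝ}

theorem cdf_quant (hp : Integrable p) (h1 : ∫ t, p t = 1) {u : ℝ} (hu : u ∈ Ioo (0 : ℝ) 1) :
    cdf p (quant p u) = u :=
  Function.invFun_eq (exists_cdf_eq hp hu.1 (h1 ▸ hu.2))

variable (hp : Integrable p) (hnn : ∀ t, 0 ≤ p t) (h1 : ∫ t, p t = 1)
include hp hnn h1

theorem monotoneOn_quant : MonotoneOn (quant p) (Ioo 0 1) := by
  intro u hu v hv huv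
  by_contra! hlt
  have := monotone_cdf hp hnn hlt.le
  rw [cdf_quant hp h1 hu, cdf_quant hp h1 hv] at this
  exact hlt.ne (congrArg (quant p) (le_antisymm this huv))

theorem volume_quant_preimage_Iic (x : ℝ) :
    volume (quant p ⁻¹' Iic x ∩ Ioo 0 1) = ENNReal.ofReal (cdf p x) := by
  apply le_antisymm
  · calc volume (quant p ⁻¹' Iic x ∩ Ioo 0 1) ≤ volume (Ioc 0 (cdf p x)) := by
          refine measure_mono fun u ⟨hux, hu⟩ => ⟨hu.1, ?_⟩
          simpa [cdf_quant hp h1 hu] using monotone_cdf hp hnn hux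
      _ = ENNReal.ofReal (cdf p x) := by simp
  · calc ENNReal.ofReal (cdf p x) = volume (Ioo 0 (cdf p x)) := by simp
      _ ≤ volume (quant p ⁻¹' Iic x ∩ Ioo 0 1) := by
          refine measure_mono fun u ⟨hu0, hux⟩ => ?_
          have hu : u ∈ Ioo (0 : ℝ) 1 := ⟨hu0, hux.trans_le (h1 ▸ cdf_le_integral hp hnn x)⟩
          refine ⟨show quant p u ≤ x from not_lt.1 fun hlt => hux.not_ge ?_, hu⟩
          simpa [cdf_quant hp h1 hu] using monotone_cdf hp hnn hlt.le

theorem aemeasurable_quant : AEMeasurable (quant p) (volume.restrict (Ioo 0 1)) :=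
  aemeasurable_restrict_of_monotoneOn measurableSet_Ioo (monotoneOn_quant hp hnn h1)

theorem map_quant_volume_Ioo :
    (volume.restrict (Ioo 0 1)).map (quant p) =
      volume.withDensity fun t => ENNReal.ofReal (p t) := by
  have hm := aemeasurable_quant hp hnn h1
  refine Measure.ext_of_Iic _ _ fun x => ?_
  rw [Measure.map_apply_of_aemeasurable hm measurableSet_Iic,
    Measure.restrict_apply' measurableSet_Ioo, volume_quant_preimage_Iic hp hnn h1,
    withDensity_apply _ measurableSet_Iic,
    ← ofReal_integral_eq_lintegral_ofReal hp.integrableOn (.of_forall hnn), cdf]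

theorem memLp_quant (hp2 : Integrable fun t => p t * t ^ 2) :
    MemLp (quant p) 2 (volume.restrict (Ioo 0 1)) := by
  have hm := aemeasurable_quant hp hnn h1
  have hsq : Measurable fun x : ℝ => ENNReal.ofReal (x ^ 2) := by fun_prop
  refine (memLp_two_iff_integrable_sq hm.aestronglyMeasurable).2
    ⟨(hm.pow_const 2).aestronglyMeasurable, ?_⟩
  rw [hasFiniteIntegral_iff_ofReal (.of_forall fun u => sq_nonneg _),
    ← lintegral_map' hsq.aemeasurable hm, map_quant_volume_Ioo hp hnn h1,
    lintegral_withDensity_eq_lintegral_mul₀ hp.aemeasurable.ennreal_ofReal hsq.aemeasurable]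
  have : ∀ t, ((fun t => ENNReal.ofReal (p t)) * fun t => ENNReal.ofReal (t ^ 2)) t
      = ENNReal.ofReal (p t * t ^ 2) := fun t => (ENNReal.ofReal_mul (hnn t)).symm
  rw [lintegral_congr this, ← ofReal_integral_eq_lintegral_ofReal hp2
    (.of_forall fun t => mul_nonneg (hnn t) (sq_nonneg t))]
  exact ENNReal.ofReal_lt_top

end Quantile

theorem memLp_quant_zero : MemLp (quant fun _ => (0 : ℝ)) 2 (volume.restrict (Ioo 0 1)) := by
  have hjunk : ∀ u : ℝ, u ≠ 0 → quant (fun _ => (0 : ℝ)) u = Classical.choice inferInstance :=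
    fun u hu => Function.invFun_neg fun ⟨x, hx⟩ => hu (by simpa [cdf] using hx.symm)
  refine (memLp_const (Classical.choice inferInstance : ℝ)).ae_eq ?_
  filter_upwards [ae_restrict_mem measurableSet_Ioo] with u hu
  exact (hjunk u hu.1.ne').symm

theorem memLp_quant_div_L1 {p : ℝ → ℝ} (hp : Integrable p) (hnn : ∀ t, 0 ≤ p t)
    (hp2 : Integrable fun t => p t * t ^ 2) :
    MemLp (quant fun t => p t / L1 p) 2 (volume.restrict (Ioo 0 1)) := by
  have hL1 : L1 p = ∫ t, p t := integral_congr_ae (.of_forall fun t => abs_of_nonneg (hnn t))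
  -- If `L1 p = 0`, division by zero turns the normalized function into `0`, whose `quant` is the
  -- constant junk value of `Function.invFun` on `(0, 1)`.
  rcases eq_or_ne (L1 p) 0 with h0 | h0
  · simpa [h0] using memLp_quant_zero
  refine memLp_quant (hp.div_const _) (fun t => div_nonneg (hnn t) (hL1 ▸ integral_nonneg hnn))
    (by rw [integral_div, ← hL1, div_self h0]) ?_
  exact (hp2.div_const (L1 p)).congr (.of_forall fun t => div_mul_eq_mul_div _ _ _ |>.symm)

theorem integrable_sigPos'_mul_sq {s : ℝ → ℝ} (hs : Integrable s)
    (hs2 : Integrable fun t => s t * |t| ^ 2) : Integrable fun t => sigPos' s t * t ^ 2 := by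
  refine hs2.norm.mono' (hs.pos_part.aestronglyMeasurable.mul (by fun_prop))
    (.of_forall fun t => ?_)
  simp only [sigPos', norm_mul, norm_pow, Real.norm_eq_abs, abs_abs]
  gcongr ?_ * _
  rw [abs_of_nonneg (le_max_right _ _)]
  exact max_le (le_abs_self _) (abs_nonneg _)

theorem memLp_quant_sigPos' {s : ℝ → ℝ} (hs : Integrable s)
    (hs2 : Integrable fun t => s t * |t| ^ 2) :
    MemLp (quant fun t => sigPos' s t / L1 (sigPos' s)) 2 (volume.restrict (Ioo 0 1)) :=
  memLp_quant_div_L1 hs.pos_part (fun _ => le_max_right _ _) (integrable_sigPos'_mul_sq hs hs2)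

theorem memLp_quant_sigNeg' {s : ℝ → ℝ} (hs : Integrable s)
    (hs2 : Integrable fun t => s t * |t| ^ 2) :
    MemLp (quant fun t => sigNeg' s t / L1 (sigNeg' s)) 2 (volume.restrict (Ioo 0 1)) :=
  -- `sigNeg' s` is definitionally `sigPos' (-s)`.
  memLp_quant_sigPos' (s := -s) hs.neg (by simpa only [Pi.neg_apply, neg_mul] using hs2.fun_neg)

theorem W2sq_nonneg (p q : ℝ → ℝ) : 0 ≤ W2sq p q :=
  integral_nonneg fun _ => sq_nonneg _

theorem DW2sq_nonneg (p q : ℝ → ℝ) : 0 ≤ DW2sq p q :=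
  add_nonneg (W2sq_nonneg _ _) (sq_nonneg _)

section Triangle

variable {p q r : ℝ → ℝ}

theorem sqrt_W2sq_le (hp : MemLp (quant p) 2 (volume.restrict (Ioo 0 1)))
    (hq : MemLp (quant q) 2 (volume.restrict (Ioo 0 1)))
    (hr : MemLp (quant r) 2 (volume.restrict (Ioo 0 1))) :
    √(W2sq p r) ≤ √(W2sq p q) + √(W2sq q r) := by
  simpa only [W2sq, Pi.sub_apply, sub_add_sub_cancel] using
    sqrt_integral_add_sq_le (hp.sub hq) (hq.sub hr)

theorem sqrt_DW2sq_le (hp : MemLp (quant fun t => p t / L1 p) 2 (volume.restrict (Ioo 0 1)))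
    (hq : MemLp (quant fun t => q t / L1 q) 2 (volume.restrict (Ioo 0 1)))
    (hr : MemLp (quant fun t => r t / L1 r) 2 (volume.restrict (Ioo 0 1))) :
    √(DW2sq p r) ≤ √(DW2sq p q) + √(DW2sq q r) :=
  sqrt_add_le_of_sqrt_le_of_sqrt_le (W2sq_nonneg _ _) (sq_nonneg _) (W2sq_nonneg _ _)
    (sq_nonneg _) (sqrt_W2sq_le hp hq hr)
    (by simpa only [Real.sqrt_sq_eq_abs] using abs_sub_le (L1 p) (L1 q) (L1 r))

end Triangle

/-- Triangle inequality for the signed Wasserstein distance. -/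
theorem DS_triangle (s₁ s₂ s₃ : ℝ → ℝ)
    (h₁ : Integrable s₁) (h₂ : Integrable s₂) (h₃ : Integrable s₃)
    (h₁2 : Integrable (fun t => s₁ t * |t| ^ 2))
    (h₂2 : Integrable (fun t => s₂ t * |t| ^ 2))
    (h₃2 : Integrable (fun t => s₃ t * |t| ^ 2)) :
    DS s₁ s₃ ≤ DS s₁ s₂ + DS s₂ s₃ :=
  sqrt_add_le_of_sqrt_le_of_sqrt_le (DW2sq_nonneg _ _) (DW2sq_nonneg _ _) (DW2sq_nonneg _ _)
    (DW2sq_nonneg _ _)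
    (sqrt_DW2sq_le (memLp_quant_sigPos' h₁ h₁2) (memLp_quant_sigPos' h₂ h₂2)
      (memLp_quant_sigPos' h₃ h₃2))
    (sqrt_DW2sq_le (memLp_quant_sigNeg' h₁ h₁2) (memLp_quant_sigNeg' h₂ h₂2)
      (memLp_quant_sigNeg' h₃ h₃2))
end
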